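/- Let c ≥ 1, let G be a group, and let π : F → G and π̄ : F̄ → G be surjective group homomorphisms from free groups F and F̄, with kernels R = ker π and R̄ = ker π̄. Then there is a group isomorphism (R ∩ γ_{c+1}(F))/⟨T_{c+1}(F) ∩ R⟩ ≅ (R̄ ∩ γ_{c+1}(F̄))/⟨T_{c+1}(F̄) ∩ R̄⟩; that is, the c-nilpotent B̃₀-invariant of G is independent of the chosen free presentation of G. -/

import Mathlib

open Subgroup
open scoped commutatorElement

/-- `Tset G c` is the set `T_{c+1}(G)` of left-normed commutators of weight `c+1` in `G`:
`Tset G 0 = G` (weight-one "commutators", i.e. all elements), and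
`Tset G (n+1) = {⁅a, g⁆ | a ∈ Tset G n, g ∈ G}`. -/
def Tset (G : Type*) [Group G] : ℕ → Set G
  | 0 => Set.univ
  | n + 1 => {x | ∃ a ∈ Tset G n, ∃ g : G, x = ⁅a, g⁆}

theorem Tset_conj {G : Type*} [Group G] (n : ℕ) {x : G} (hx : x ∈ Tset G n) (g : G) :
    g * x * g⁻¹ ∈ Tset G n := by
  induction n generalizing x with
  | zero => trivial
  | succ n ih =>
      obtain ⟨a, ha, b, rfl⟩ := hx
      exact ⟨g * a * g⁻¹, ih ha, g * b * g⁻¹, conjugate_commutatorElement a b g⟩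

/-- `Tcl c S = ⟨T_{c+1}(G) ∩ S⟩`, the subgroup generated by the left-normed commutators of
weight `c+1` lying in `S`. -/
def Tcl {G : Type*} [Group G] (c : ℕ) (S : Subgroup G) : Subgroup G :=
  Subgroup.closure (Tset G c ∩ (S : Set G))

instance Tcl_normal {G : Type*} [Group G] (c : ℕ) (S : Subgroup G) [hS : S.Normal] :
    (Tcl c S).Normal := by
  constructor
  intro n hn g
  induction hn using Subgroup.closure_induction with
  | mem x hx =>
      exact Subgroup.subset_closure ⟨Tset_conj c hx.1 g, hS.conj_mem x hx.2 g⟩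
  | one => simpa using (Tcl c S).one_mem
  | mul x y _ _ hx hy =>
      have h : g * (x * y) * g⁻¹ = (g * x * g⁻¹) * (g * y * g⁻¹) := by group
      rw [h]; exact mul_mem hx hy
  | inv x _ hx =>
      have h : g * x⁻¹ * g⁻¹ = (g * x * g⁻¹)⁻¹ := by group
      rw [h]; exact inv_mem hx

theorem Tset_subset_lcs {G : Type*} [Group G] (n : ℕ) :
    Tset G n ⊆ (Subgroup.lowerCentralSeries (⊤ : Subgroup G) n : Set G) := by
  induction n with
  | zero => intro x _; simp [Subgroup.lowerCentralSeries_zero]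
  | succ n ih =>
      rintro x ⟨a, ha, b, rfl⟩
      rw [Subgroup.lowerCentralSeries_succ]
      exact Subgroup.commutator_mem_commutator (ih ha) (Subgroup.mem_top b)

theorem Tcl_le {G : Type*} [Group G] (c : ℕ) (S : Subgroup G) : Tcl c S ≤ S :=
  (Subgroup.closure_le S).2 Set.inter_subset_right

theorem Tcl_le_lcs {G : Type*} [Group G] (c : ℕ) (S : Subgroup G) :
    Tcl c S ≤ Subgroup.lowerCentralSeries (⊤ : Subgroup G) c :=
  (Subgroup.closure_le _).2 fun _ hx => Tset_subset_lcs c hx.1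

theorem Tcl_mono {G : Type*} [Group G] (c : ℕ) {R K : Subgroup G} (h : R ≤ K) :
    Tcl c R ≤ Tcl c K :=
  Subgroup.closure_mono (Set.inter_subset_inter_right _ h)

theorem subgroupOf_le_comap_inclusion {F : Type*} [Group F] {A B H₁ H₂ : Subgroup F}
    (hH : H₁ ≤ H₂) (hAB : A ≤ B) :
    A.subgroupOf H₁ ≤ (B.subgroupOf H₂).comap (Subgroup.inclusion hH) := by
  intro x hx
  rw [Subgroup.mem_comap, Subgroup.mem_subgroupOf, Subgroup.coe_inclusion]
  exact hAB (Subgroup.mem_subgroupOf.mp hx)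

/-!
Lift each presentation through the other (free groups are projective): `φ : F̄ → F` and
`ψ : F → F̄` over `G`. They induce homomorphisms between the two quotients, and it suffices
that an endomorphism `θ` of `F` with `θ z ≡ z (mod R)` for all `z` induces the identity on
`(R ∩ γ_{c+1}(F))/⟨T_{c+1}(F) ∩ R⟩`. Modulo `⟨T_{n+2} ∩ R⟩` the subgroup `⟨T_{n+1} ∩ R⟩` is
central and `R` commutes with `T_{n+1}`, so by induction on the weight `θ t ≡ t` modulo
`⟨T_{n+1} ∩ R⟩` for every `t ∈ T_{n+1}`; these `t` generate `γ_{n+1}(F)`.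
-/

section Commutators

variable {G : Type*} [Group G]

theorem Tcl_zero (R : Subgroup G) : Tcl 0 R = R := by
  rw [Tcl, Tset, Set.univ_inter, closure_eq]

theorem commutatorElement_mem_Tcl_succ {R : Subgroup G} [R.Normal] {n : ℕ} {a s : G}
    (ha : a ∈ Tset G n) (hs : s ∈ R) : ⁅a, s⁆ ∈ Tcl (n + 1) R :=
  subset_closure ⟨⟨a, ha, s, rfl⟩, commutator_le_right ⊤ R (commutator_mem_commutator (mem_top a) hs)⟩

theorem Tcl_le_upperCentralSeriesStep (R : Subgroup G) [R.Normal] (n : ℕ) :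
    Tcl n R ≤ Subgroup.upperCentralSeriesStep (Tcl (n + 1) R) :=
  (closure_le _).2 fun t ⟨ht, htR⟩ y =>
    subset_closure ⟨⟨t, ht, y, rfl⟩, commutator_le_left R ⊤ (commutator_mem_commutator htR (mem_top y))⟩

theorem Tcl_top (n : ℕ) : Tcl n (⊤ : Subgroup G) = Subgroup.lowerCentralSeries ⊤ n := by
  refine le_antisymm (Tcl_le_lcs n ⊤) ?_
  induction n with
  | zero => rw [Tcl_zero]; rfl
  | succ n ih =>
      rw [Subgroup.lowerCentralSeries_succ, commutator_le]
      exact fun a ha g _ => Tcl_le_upperCentralSeriesStep ⊤ n (ih ha) g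

theorem commutatorElement_inv_mul_mem {M : Subgroup G} [M.Normal] {a k g s : G}
    (hk : k ∈ Subgroup.upperCentralSeriesStep M) (hs : ⁅a, s⁆ ∈ M) :
    ⁅a, g⁆⁻¹ * ⁅a * k, g * s⁆ ∈ M := by
  have h : ⁅a, g⁆⁻¹ * ⁅a * k, g * s⁆ =
      (⁅a, g⁆⁻¹ * a) * ⁅k, g * s⁆ * (⁅a, g⁆⁻¹ * a)⁻¹ * (g * ⁅a, s⁆ * g⁻¹) := by
    simp only [commutatorElement_def]; group
  rw [h]
  exact mul_mem (Normal.conj_mem ‹_› _ (hk _) _) (Normal.conj_mem ‹_› _ hs g)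

variable {R : Subgroup G} [R.Normal] {θ : G →* G}

theorem inv_mul_map_mem_Tcl_of_mem_Tset (hθ : ∀ z, z⁻¹ * θ z ∈ R) {n : ℕ} {t : G}
    (ht : t ∈ Tset G n) : t⁻¹ * θ t ∈ Tcl n R := by
  induction n generalizing t with
  | zero => rw [Tcl_zero]; exact hθ t
  | succ n ih =>
      obtain ⟨a, ha, g, rfl⟩ := ht
      rw [map_commutatorElement, ← mul_inv_cancel_left a (θ a), ← mul_inv_cancel_left g (θ g)]
      exact commutatorElement_inv_mul_mem (Tcl_le_upperCentralSeriesStep R n (ih ha))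
        (commutatorElement_mem_Tcl_succ ha (hθ g))

theorem inv_mul_map_mem_Tcl (hθ : ∀ z, z⁻¹ * θ z ∈ R) {n : ℕ} {x : G}
    (hx : x ∈ Subgroup.lowerCentralSeries ⊤ n) : x⁻¹ * θ x ∈ Tcl n R := by
  have h : Subgroup.lowerCentralSeries ⊤ n ≤ (QuotientGroup.mk' (Tcl n R)).eqLocus
      ((QuotientGroup.mk' (Tcl n R)).comp θ) := by
    rw [← Tcl_top, Tcl, closure_le]
    exact fun t ht => QuotientGroup.eq.2 (inv_mul_map_mem_Tcl_of_mem_Tset hθ ht.1)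
  exact QuotientGroup.eq.1 (h hx)

end Commutators

section Functoriality

variable {G H K : Type*} [Group G] [Group H] [Group K]

theorem Tset_map (f : G →* H) {n : ℕ} {x : G} (hx : x ∈ Tset G n) : f x ∈ Tset H n := by
  induction n generalizing x with
  | zero => trivial
  | succ n ih =>
      obtain ⟨a, ha, g, rfl⟩ := hx
      exact ⟨f a, ih ha, f g, map_commutatorElement f a g⟩

theorem Tcl_le_comap (c : ℕ) (f : G →* H) {R : Subgroup G} {R' : Subgroup H}
    (h : R ≤ R'.comap f) : Tcl c R ≤ (Tcl c R').comap f :=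
  (closure_le _).2 fun _ hx => subset_closure ⟨Tset_map f hx.1, h hx.2⟩

theorem lowerCentralSeries_le_comap (f : G →* H) (n : ℕ) :
    Subgroup.lowerCentralSeries (⊤ : Subgroup G) n ≤
      (Subgroup.lowerCentralSeries (⊤ : Subgroup H) n).comap f := by
  rw [← map_le_iff_le_comap, map_lowerCentralSeries]
  exact lowerCentralSeries_mono n le_top

abbrev BTildeZero (c : ℕ) (R : Subgroup G) [R.Normal] : Type _ :=
  ↥(R ⊓ Subgroup.lowerCentralSeries (⊤ : Subgroup G) c) ⧸
    (Tcl c R).subgroupOf (R ⊓ Subgroup.lowerCentralSeries (⊤ : Subgroup G) c)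

namespace BTildeZero

variable (c : ℕ) {R : Subgroup G} {R' : Subgroup H} {R'' : Subgroup K}
  [R.Normal] [R'.Normal] [R''.Normal]

def map (f : G →* H) (h : R ≤ R'.comap f) : BTildeZero c R →* BTildeZero c R' :=
  QuotientGroup.map _ _
    ((f.comp (R ⊓ Subgroup.lowerCentralSeries ⊤ c).subtype).codRestrict
        (R' ⊓ Subgroup.lowerCentralSeries ⊤ c) fun x =>
      mem_inf.2 ⟨h (mem_inf.1 x.2).1, lowerCentralSeries_le_comap f c (mem_inf.1 x.2).2⟩)
    fun _ hx => mem_subgroupOf.2 (Tcl_le_comap c f h (mem_subgroupOf.1 hx))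

theorem map_comp_map (f : G →* H) (g : H →* K) (hf : R ≤ R'.comap f) (hg : R' ≤ R''.comap g) :
    (map c g hg).comp (map c f hf) = map c (g.comp f) (hf.trans (comap_mono hg)) := by
  ext
  rfl

theorem map_eq_id {θ : G →* G} (hθ : ∀ z, z⁻¹ * θ z ∈ R) (h : R ≤ R.comap θ) :
    map c θ h = MonoidHom.id _ := by
  ext x
  refine (QuotientGroup.eq.2 ?_).symm
  exact inv_mul_map_mem_Tcl hθ x.2.2

def congr (f : G →* H) (g : H →* G) (hf : R ≤ R'.comap f) (hg : R' ≤ R.comap g)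
    (hgf : ∀ z, z⁻¹ * g (f z) ∈ R) (hfg : ∀ z, z⁻¹ * f (g z) ∈ R') :
    BTildeZero c R ≃* BTildeZero c R' :=
  (map c f hf).toMulEquiv (map c g hg)
    (by rw [map_comp_map, map_eq_id c hgf]) (by rw [map_comp_map, map_eq_id c hfg])

end BTildeZero

end Functoriality

theorem exists_comp_eq_of_surjective {α : Type*} {G H : Type*} [Group G] [Group H]
    {π : G →* H} (hπ : Function.Surjective π) (f : FreeGroup α →* H) :
    ∃ φ : FreeGroup α →* G, π.comp φ = f :=
  ⟨FreeGroup.lift fun a => Function.surjInv hπ (f (.of a)),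
    FreeGroup.ext_hom _ _ fun a => by simp [Function.surjInv_eq hπ]⟩

theorem inv_mul_mem_ker_of_comp_eq {G H : Type*} [Group G] [Group H] {π : G →* H}
    {θ : G →* G} (h : π.comp θ = π) (z : G) : z⁻¹ * θ z ∈ π.ker := by
  rw [MonoidHom.mem_ker, map_mul, ← MonoidHom.comp_apply, h, map_inv, inv_mul_cancel]

theorem stmt6_general (c : ℕ) {G : Type*} [Group G] {α β : Type*}
    (π : FreeGroup α →* G) (hπ : Function.Surjective π)
    (πb : FreeGroup β →* G) (hπb : Function.Surjective πb) :
    Nonempty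
      ((↥(π.ker ⊓ Subgroup.lowerCentralSeries (⊤ : Subgroup (FreeGroup α)) c) ⧸
          (Tcl c π.ker).subgroupOf (π.ker ⊓ Subgroup.lowerCentralSeries (⊤ : Subgroup (FreeGroup α)) c)) ≃*
        (↥(πb.ker ⊓ Subgroup.lowerCentralSeries (⊤ : Subgroup (FreeGroup β)) c) ⧸
          (Tcl c πb.ker).subgroupOf (πb.ker ⊓ Subgroup.lowerCentralSeries (⊤ : Subgroup (FreeGroup β)) c))) := by
  obtain ⟨φ, hφ⟩ := exists_comp_eq_of_surjective hπ πb
  obtain ⟨ψ, hψ⟩ := exists_comp_eq_of_surjective hπb π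
  have hψφ : π.comp (φ.comp ψ) = π := by rw [← MonoidHom.comp_assoc, hφ, hψ]
  have hφψ : πb.comp (ψ.comp φ) = πb := by rw [← MonoidHom.comp_assoc, hψ, hφ]
  exact ⟨BTildeZero.congr c ψ φ (by rw [MonoidHom.comap_ker, hψ]) (by rw [MonoidHom.comap_ker, hφ])
    (inv_mul_mem_ker_of_comp_eq hψφ) (inv_mul_mem_ker_of_comp_eq hφψ)⟩

/-- for `c ≥ 1`, the `c`-nilpotent `B̃₀`-invariant
`(R ∩ γ_{c+1}(F))/⟨T_{c+1}(F) ∩ R⟩` is independent of the chosen free presentation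
`π : F ↠ G`, `R = ker π`, of `G`.  Here `γ_{c+1}(F) = lowerCentralSeries F c` and
`⟨T_{c+1}(F) ∩ R⟩ = Tcl c R`. -/
theorem stmt6 (c : ℕ) (hc : 1 ≤ c) {G : Type*} [Group G] {α β : Type*}
    (π : FreeGroup α →* G) (hπ : Function.Surjective π)
    (πb : FreeGroup β →* G) (hπb : Function.Surjective πb) :
    Nonempty
      ((↥(π.ker ⊓ Subgroup.lowerCentralSeries (⊤ : Subgroup (FreeGroup α)) c) ⧸
          (Tcl c π.ker).subgroupOf (π.ker ⊓ Subgroup.lowerCentralSeries (⊤ : Subgroup (FreeGroup α)) c)) ≃*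
        (↥(πb.ker ⊓ Subgroup.lowerCentralSeries (⊤ : Subgroup (FreeGroup β)) c) ⧸
          (Tcl c πb.ker).subgroupOf (πb.ker ⊓ Subgroup.lowerCentralSeries (⊤ : Subgroup (FreeGroup β)) c))) :=
  stmt6_general c π hπ πb hπb
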